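/- (Comparison with a slit-harmonic function.) Let R>0. Let v be a continuous function on the closed ball of radius R centered at 0 in ℝ², even with respect to x₂, harmonic on B_R∖S, and vanishing on S∩B_R. Let u be a solution to the thin obstacle problem in B_R that extends continuously to the closed ball, and suppose u ≥ v on ∂B_R. Then u ≥ v everywhere in B_R. -/

import Mathlib

noncomputable section

open Complex MeasureTheory Metric

/-- The function `u_s = r^s · cos(s·θ)` in polar coordinates, where `r = |z|` and
`θ = arg z ∈ (−π, π]`.  (It takes the value `0` at the origin.) -/
def us (s : ℝ) (z : ℂ) : ℝ := ‖z‖ ^ s * Real.cos (s * Complex.arg z)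

/-- The average of `u` over the circle `∂B_ρ(y)`. -/
def circAvg (u : ℂ → ℝ) (y : ℂ) (ρ : ℝ) : ℝ :=
  (2 * Real.pi)⁻¹ * ∫ t in (0:ℝ)..(2 * Real.pi), u (y + (ρ : ℂ) * Complex.exp ((t : ℂ) * Complex.I))

/-- Mean-value characterization of harmonicity of a continuous function on a set `A`:
the value at a point equals the average over every circle whose closed disc lies in `A`. -/
def IsHarmOn (u : ℂ → ℝ) (A : Set ℂ) : Prop :=
  ContinuousOn u A ∧
    ∀ y : ℂ, ∀ ρ : ℝ, 0 < ρ → closedBall y ρ ⊆ A → circAvg u y ρ = u y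

/-- The slit `S = {(x₁, 0) : x₁ ≤ 0}`. -/
def Slit : Set ℂ := {z : ℂ | z.im = 0 ∧ z.re ≤ 0}

/-- A solution to the thin obstacle problem in `Ω`: continuous, even in `x₂`,
superharmonic (mean-value form), nonnegative on `{x₂ = 0}`, and harmonic away from
the contact set `{(x₁,0) : u(x₁,0) = 0}`. -/
def IsTOS (u : ℂ → ℝ) (Ω : Set ℂ) : Prop :=
  ContinuousOn u Ω ∧
    (∀ z ∈ Ω, (starRingEnd ℂ) z ∈ Ω → u ((starRingEnd ℂ) z) = u z) ∧
    (∀ y : ℂ, ∀ ρ : ℝ, 0 < ρ → closedBall y ρ ⊆ Ω → circAvg u y ρ ≤ u y) ∧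
    (∀ z ∈ Ω, z.im = 0 → 0 ≤ u z) ∧
    IsHarmOn u (Ω \ {z : ℂ | z.im = 0 ∧ u z = 0})

/-- A solution to the thin obstacle problem in all of `ℝ²`: a solution in `B_R` for all `R > 0`. -/
def IsTOSR2 (u : ℂ → ℝ) : Prop := ∀ R : ℝ, 0 < R → IsTOS u (ball 0 R)

/-- The data `p = u_{2k−1/2} + Σ_{l=1}^{2k−1} a_l · u_{2k−1/2−l}`. -/
def pData (k : ℕ) (a : ℕ → ℝ) (z : ℂ) : ℝ :=
  us (2 * (k:ℝ) - 1/2) z +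
    ∑ l ∈ Finset.Icc 1 (2*k-1), a l * us (2 * (k:ℝ) - 1/2 - (l:ℝ)) z

/-- `u` is a solution to the thin obstacle problem in `ℝ²` with data `p` at infinity. -/
def SolWithData (u p : ℂ → ℝ) : Prop :=
  IsTOSR2 u ∧ ∃ C : ℝ, ∀ z : ℂ, |u z - p z| ≤ C

/-!
The difference `u - v` is continuous on the closed disc, has the super-mean-value property on
`B_R ∖ S` (where `u` is superharmonic and `v` harmonic), and is nonnegative on the rest of the
disc: on `∂B_R` by assumption, and on `S ∩ B_R` because `v = 0` there while `u ≥ 0` on the axis.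
The weak minimum principle for the super-mean-value property then gives `u - v ≥ 0`.
-/

open Real Set

theorem circAvg_eq_circleAverage (u : ℂ → ℝ) (y : ℂ) (ρ : ℝ) :
    circAvg u y ρ = circleAverage u y ρ := rfl

theorem isClosed_slit : IsClosed Slit :=
  (isClosed_eq continuous_im continuous_const).inter (isClosed_le continuous_re continuous_const)

theorem lt_circleAverage_of_le_of_exists_lt {f : ℂ → ℝ} {c : ℂ} {ρ a : ℝ} (hρ : 0 < ρ)
    (hf : ContinuousOn f (sphere c ρ)) (hle : ∀ z ∈ sphere c ρ, a ≤ f z)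
    (hlt : ∃ z ∈ sphere c ρ, a < f z) : a < circleAverage f c ρ := by
  obtain ⟨_, hz, hfz⟩ := hlt
  rw [← abs_of_pos hρ, ← image_circleMap_Ioc] at hz
  obtain ⟨θ, hθ, rfl⟩ := hz
  have hmaps : ∀ θ, circleMap c ρ θ ∈ sphere c ρ := circleMap_mem_sphere c hρ.le
  have hcont : ContinuousOn (fun θ ↦ f (circleMap c ρ θ)) (Icc 0 (2 * π)) :=
    (hf.comp_continuous (continuous_circleMap c ρ) hmaps).continuousOn
  have hint := intervalIntegral.integral_lt_integral_of_continuousOn_of_le_of_exists_lt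
    two_pi_pos continuousOn_const hcont (fun θ _ ↦ hle _ (hmaps θ)) ⟨θ, Ioc_subset_Icc_self hθ, hfz⟩
  rw [intervalIntegral.integral_const, smul_eq_mul, sub_zero] at hint
  rw [circleAverage_def, smul_eq_mul, lt_inv_mul_iff₀ two_pi_pos]
  linarith

theorem exists_mem_sphere_infDist_le {E : Type*} [NormedAddCommGroup E] [NormedSpace ℝ E]
    [ProperSpace E] {s : Set E} (hs : IsClosed s) (hne : s.Nonempty) (x : E) {ρ : ℝ}
    (hρ : 0 ≤ ρ) (hρd : ρ ≤ infDist x s) :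
    ∃ y ∈ sphere x ρ, infDist y s ≤ infDist x s - ρ := by
  obtain ⟨p, hp, hpd⟩ := hs.exists_infDist_eq_dist hne x
  rcases hρ.eq_or_lt with rfl | hρ
  · exact ⟨x, by simp, by simp⟩
  have hd : 0 < dist x p := hpd ▸ hρ.trans_le hρd
  set t := ρ / dist x p
  have ht : t ≤ 1 := div_le_one_of_le₀ (hpd ▸ hρd) hd.le
  refine ⟨AffineMap.lineMap x p t, ?_, ?_⟩
  · rw [mem_sphere, dist_lineMap_left, Real.norm_of_nonneg (by positivity),
      div_mul_cancel₀ _ hd.ne']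
  · calc infDist (AffineMap.lineMap x p t) s ≤ dist (AffineMap.lineMap x p t) p :=
          infDist_le_dist_of_mem hp
      _ = infDist x s - ρ := by
          rw [dist_lineMap_right, Real.norm_of_nonneg (sub_nonneg.2 ht), sub_mul,
            div_mul_cancel₀ _ hd.ne', one_mul, hpd]

/- If the minimum of `w` were negative, it would be attained only in `U`; at a minimum point
nearest to `Uᶜ`, the circle of half that distance contains a point closer to `Uᶜ`, hence not a
minimum point, so the circle average exceeds the minimum. -/
theorem nonneg_of_circleAverage_le {K U : Set ℂ} {w : ℂ → ℝ} (hK : IsCompact K)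
    (hU : IsOpen U) (hUK : U ⊆ K) (hw : ContinuousOn w K) (hwb : ∀ z ∈ K \ U, 0 ≤ w z)
    (hsuper : ∀ y ρ, 0 < ρ → closedBall y ρ ⊆ U → circleAverage w y ρ ≤ w y) :
    ∀ z ∈ K, 0 ≤ w z := by
  by_contra! ⟨z, hzK, hwz⟩
  obtain ⟨z₀, hz₀K, hz₀min⟩ := hK.exists_isMinOn ⟨z, hzK⟩ hw
  set m := w z₀
  have hm : m < 0 := (hz₀min hzK).trans_lt hwz
  set A := K ∩ w ⁻¹' {m}
  have hAU : A ⊆ U := fun x ⟨hxK, hxm⟩ ↦ by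
    by_contra hxU
    exact (hwb x ⟨hxK, hxU⟩).not_gt (hxm ▸ hm)
  have hA : IsCompact A :=
    hK.of_isClosed_subset (hw.preimage_isClosed_of_isClosed hK.isClosed isClosed_singleton)
      inter_subset_left
  have hUc : (Uᶜ).Nonempty := nonempty_compl.2 fun h ↦ hK.ne_univ (univ_subset_iff.1 (h ▸ hUK))
  obtain ⟨z₁, hz₁A, hz₁min⟩ := hA.exists_isMinOn ⟨z₀, hz₀K, rfl⟩
    (continuous_infDist_pt Uᶜ).continuousOn
  set d := infDist z₁ Uᶜ
  have hd : 0 < d := (hU.isClosed_compl.notMem_iff_infDist_pos hUc).1 (not_not.2 (hAU hz₁A))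
  have hball : closedBall z₁ (d / 2) ⊆ U :=
    (closedBall_subset_ball (half_lt_self hd)).trans ball_infDist_compl_subset
  obtain ⟨z₂, hz₂, hz₂d⟩ :=
    exists_mem_sphere_infDist_le hU.isClosed_compl hUc z₁ (half_pos hd).le (half_le_self hd.le)
  have hz₂K : z₂ ∈ K := hUK (hball (sphere_subset_closedBall hz₂))
  have hmz₂ : m < w z₂ := (hz₀min hz₂K).lt_of_ne fun h ↦ by
    have : d ≤ infDist z₂ Uᶜ := hz₁min ⟨hz₂K, h.symm⟩
    linarith
  have hlt : m < circleAverage w z₁ (d / 2) :=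
    lt_circleAverage_of_le_of_exists_lt (half_pos hd)
      (hw.mono (sphere_subset_closedBall.trans (hball.trans hUK)))
      (fun x hx ↦ hz₀min (hUK (hball (sphere_subset_closedBall hx)))) ⟨z₂, hz₂, hmz₂⟩
  have hle : circleAverage w z₁ (d / 2) ≤ m := hz₁A.2 ▸ hsuper z₁ _ (half_pos hd) hball
  exact hle.not_gt hlt

theorem statement14_general (R : ℝ) (v u : ℂ → ℝ)
    (hvc : ContinuousOn v (closedBall 0 R))
    (hvh : IsHarmOn v (ball 0 R \ Slit))
    (hv0 : ∀ z ∈ Slit ∩ ball (0:ℂ) R, v z = 0)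
    (hu : IsTOS u (ball 0 R))
    (huc : ContinuousOn u (closedBall 0 R))
    (hbd : ∀ z ∈ sphere (0:ℂ) R, v z ≤ u z) :
    ∀ z ∈ ball (0:ℂ) R, v z ≤ u z := by
  obtain ⟨-, -, hu_super, hu_nonneg, -⟩ := hu
  simp only [circAvg_eq_circleAverage] at hu_super hvh
  have hUK : ball (0:ℂ) R \ Slit ⊆ closedBall 0 R := sdiff_subset.trans ball_subset_closedBall
  have hbdry : ∀ x ∈ closedBall 0 R \ (ball 0 R \ Slit), 0 ≤ (u - v) x := by
    rintro x ⟨hxK, hxU⟩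
    by_cases hx : x ∈ ball (0:ℂ) R
    · have hxS : x ∈ Slit := not_notMem.1 fun h ↦ hxU ⟨hx, h⟩
      simpa [hv0 x ⟨hxS, hx⟩] using hu_nonneg x hx hxS.1
    · exact sub_nonneg.2 (hbd x (closedBall_sdiff_ball (x := (0:ℂ)) ▸ ⟨hxK, hx⟩))
  have hsuper : ∀ y ρ, 0 < ρ → closedBall y ρ ⊆ ball 0 R \ Slit →
      circleAverage (u - v) y ρ ≤ (u - v) y := by
    intro y ρ hρ hyρ
    have hsph : sphere y ρ ⊆ closedBall 0 R := sphere_subset_closedBall.trans (hyρ.trans hUK)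
    rw [circleAverage_sub ((huc.mono hsph).circleIntegrable hρ.le)
      ((hvc.mono hsph).circleIntegrable hρ.le), Pi.sub_apply]
    exact sub_le_sub (hu_super y ρ hρ (hyρ.trans sdiff_subset)) (hvh.2 y ρ hρ hyρ).ge
  intro z hz
  exact sub_nonneg.1 <| nonneg_of_circleAverage_le (isCompact_closedBall 0 R)
    (isOpen_ball.sdiff isClosed_slit) hUK (huc.sub hvc) hbdry hsuper z (ball_subset_closedBall hz)

/-- Comparison with a slit-harmonic function: if a solution `u` of the thin obstacle
problem in `B_R` dominates a slit-harmonic `v` on `∂B_R`, then `u ≥ v` in `B_R`. -/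
theorem statement14 (R : ℝ) (hR : 0 < R) (v u : ℂ → ℝ)
    (hvc : ContinuousOn v (closedBall 0 R))
    (hve : ∀ z ∈ closedBall (0:ℂ) R, (starRingEnd ℂ) z ∈ closedBall (0:ℂ) R →
      v ((starRingEnd ℂ) z) = v z)
    (hvh : IsHarmOn v (ball 0 R \ Slit))
    (hv0 : ∀ z ∈ Slit ∩ ball (0:ℂ) R, v z = 0)
    (hu : IsTOS u (ball 0 R))
    (huc : ContinuousOn u (closedBall 0 R))
    (hbd : ∀ z ∈ sphere (0:ℂ) R, v z ≤ u z) :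
    ∀ z ∈ ball (0:ℂ) R, v z ≤ u z :=
  statement14_general R v u hvc hvh hv0 hu huc hbd
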